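/- arXiv:1506.08152 — 3 statements merged into one kernel-verified Lean document; each statement's English description precedes it below -/
import Mathlib

section
/- Let V be a real vector space and H : V → V → ℝ a bilinear form that is nondegenerate on both sides (if H(v, w) = 0 for all w then v = 0, and if H(v, w) = 0 for all v then w = 0). Let K₁, K₂, L₃ : V → V → V be bilinear maps satisfying, for all X, Y, Z ∈ V: (i) K₁(X,Y) = K₂(Y,X); (ii) L₃(X,Y) = -L₃(Y,X); (iii) H(K₂(X,Y), Z) = -H(Y, L₃(X,Z)); (iv) H(K₁(X,Y), Z) = H(K₁(X,Z), Y). Then K₁ = 0, K₂ = 0 and L₃ = 0. -/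
/-- Algebraic core of the structure of Fedosov supermanifolds: the symmetry
and compatibility conditions force the structure tensors `K₁`, `K₂`, `L₃`
of a symmetric superconnection compatible with an odd symplectic form to
vanish. -/
theorem K₁_K₂_L₃_eq_zero {V : Type*} [AddCommGroup V] [Module ℝ V]
    (H : V →ₗ[ℝ] V →ₗ[ℝ] ℝ)
    (hH₁ : ∀ v, (∀ w, H v w = 0) → v = 0)
    (hH₂ : ∀ w, (∀ v, H v w = 0) → w = 0)
    (K₁ K₂ L₃ : V →ₗ[ℝ] V →ₗ[ℝ] V)
    (h1 : ∀ X Y, K₁ X Y = K₂ Y X)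
    (h2 : ∀ X Y, L₃ X Y = -L₃ Y X)
    (h3 : ∀ X Y Z, H (K₂ X Y) Z = -H Y (L₃ X Z))
    (h4 : ∀ X Y Z, H (K₁ X Y) Z = H (K₁ X Z) Y) :
    K₁ = 0 ∧ K₂ = 0 ∧ L₃ = 0 := by
  have hA : ∀ X Y Z, H (K₁ X Y) Z = -H X (L₃ Y Z) := by
    intro X Y Z
    rw [h1, h3]
  have hK₁ : ∀ X Y, K₁ X Y = 0 := by
    intro X Y
    apply hH₁
    intro Z
    have e1 : H (K₁ X Y) Z = -H X (L₃ Y Z) := hA X Y Z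
    have e2 : H (K₁ X Z) Y = -H X (L₃ Z Y) := hA X Z Y
    have e3 : H (K₁ X Y) Z = H (K₁ X Z) Y := h4 X Y Z
    have e4 : L₃ Y Z = -L₃ Z Y := h2 Y Z
    rw [e1, e2, e4] at e3
    simp only [map_neg, neg_neg, LinearMap.neg_apply] at e3 ⊢
    rw [e1, e4]
    simp only [map_neg, neg_neg, LinearMap.neg_apply]
    linarith
  have hK₂ : ∀ X Y, K₂ X Y = 0 := fun X Y => (h1 Y X).symm.trans (hK₁ Y X)
  have hL₃ : ∀ Y Z, L₃ Y Z = 0 := by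
    intro Y Z
    apply hH₂
    intro X
    have := hA X Y Z
    rw [hK₁] at this
    simp at this
    linarith
  refine ⟨?_, ?_, ?_⟩ <;> ext X Y <;> simp [hK₁, hK₂, hL₃]
end

section
/- Let V be a real vector space, H : V → V → ℝ a bilinear form, K₃ : V → V → V a bilinear map that is alternating (K₃(a,b) = -K₃(b,a)) and satisfies H(K₃(a,b), c) = -H(K₃(a,c), b) for all a, b, c ∈ V. Let L₀ and Curv assign to each pair (X,Y) ∈ V × V a linear endomorphism of V, with Curv antisymmetric (Curv(X,Y)v = -Curv(Y,X)v) and L₀(X,Y)v = L₀(Y,X)v + Curv(X,Y)v for all X, Y, v ∈ V. Define A₂(X,Y,Z) : v ↦ -K₃(Curv(X,Y)v, Z) and A₃(X,Y,Z) : v ↦ -K₃(Y, L₀(X,Z)v). Then for all X, Y, Z, T, v ∈ V: H(A₃(X,Y,Z)v, T) = H(A₃(Z,Y,X)v, T) - H(A₂(Z,X,T)v, Y). -/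
/-- Part 2 of the Proposition on the symmetries of the odd symplectic curvature
tensors `A₂`, `A₃` of a Fedosov supermanifold:
`H(A₃(X,Y,Z)v, T) = H(A₃(Z,Y,X)v, T) - H(A₂(Z,X,T)v, Y)`. -/
theorem H_A₃_symm {V : Type*} [AddCommGroup V] [Module ℝ V]
    (H : V →ₗ[ℝ] V →ₗ[ℝ] ℝ)
    (K₃ : V →ₗ[ℝ] V →ₗ[ℝ] V)
    (hK₃alt : ∀ a b, K₃ a b = -K₃ b a)
    (hK₃H : ∀ a b c, H (K₃ a b) c = -H (K₃ a c) b)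
    (L₀ Curv : V → V → (V →ₗ[ℝ] V))
    (hCurv : ∀ X Y v, Curv X Y v = -Curv Y X v)
    (hL₀ : ∀ X Y v, L₀ X Y v = L₀ Y X v + Curv X Y v)
    (A₂ A₃ : V → V → V → (V →ₗ[ℝ] V))
    (hA₂ : ∀ X Y Z v, A₂ X Y Z v = -K₃ (Curv X Y v) Z)
    (hA₃ : ∀ X Y Z v, A₃ X Y Z v = -K₃ Y (L₀ X Z v)) :
    ∀ X Y Z T v, H (A₃ X Y Z v) T = H (A₃ Z Y X v) T - H (A₂ Z X T v) Y := by
  intro X Y Z T v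
  rw [hA₃, hA₃, hA₂, hL₀ X Z v, hCurv X Z v]
  simp only [map_add, map_neg, LinearMap.add_apply, LinearMap.neg_apply, map_sub]
  rw [hK₃alt Y (Curv Z X v)]
  simp only [map_neg, LinearMap.neg_apply]
  rw [hK₃H (Curv Z X v) Y T]
  ring
end

section
/- Let V be a real vector space, H : V → V → ℝ a bilinear form, K₃ : V → V → V a bilinear map that is alternating (K₃(a,b) = -K₃(b,a)) and satisfies H(K₃(a,b), c) = -H(K₃(a,c), b) for all a, b, c ∈ V. Let L₀ assign to each pair (X,Y) ∈ V × V a linear endomorphism L₀(X,Y) of V, and define A₃(X,Y,Z) : v ↦ -K₃(Y, L₀(X,Z)v). Then for all X, Y, Z, T, v ∈ V: H(A₃(Y,Z,X)v, T) = -H(A₃(Y,T,X)v, Z). -/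
/-- Part 3 of the Proposition on the symmetries of the odd symplectic curvature
tensor `A₃` of a Fedosov supermanifold:
`H(A₃(Y,Z,X)v, T) = -H(A₃(Y,T,X)v, Z)`. -/
theorem H_A₃_antisymm {V : Type*} [AddCommGroup V] [Module ℝ V]
    (H : V →ₗ[ℝ] V →ₗ[ℝ] ℝ)
    (K₃ : V →ₗ[ℝ] V →ₗ[ℝ] V)
    (hK₃alt : ∀ a b, K₃ a b = -K₃ b a)
    (hK₃H : ∀ a b c, H (K₃ a b) c = -H (K₃ a c) b)
    (L₀ : V → V → (V →ₗ[ℝ] V))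
    (A₃ : V → V → V → (V →ₗ[ℝ] V))
    (hA₃ : ∀ X Y Z v, A₃ X Y Z v = -K₃ Y (L₀ X Z v)) :
    ∀ X Y Z T v, H (A₃ Y Z X v) T = -H (A₃ Y T X v) Z := by
  intro X Y Z T v
  rw [hA₃, hA₃, hK₃alt Z, hK₃alt T]
  simp only [neg_neg, map_neg, LinearMap.neg_apply]
  rw [hK₃H]
end
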